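/- For all integers n ≥ 0, a ≥ 1, and N ≥ 0, the following inequality holds: Σ k₀!·ℓ₁!·k₁!·⋯·ℓ_n!·k_n!·m! · Π_{i=0}^{n} (S_i + (n+1−i)·a)^a ≤ (36·a^{a−1})^{n+1} · (N + (n+1)·a)!, where the sum runs over all nonnegative integers k₀, …, k_n, ℓ₁, …, ℓ_n, m with k₀ + ⋯ + k_n + ℓ₁ + ⋯ + ℓ_n + m = N, and where S_i denotes the tail sum S_i := k_i + ℓ_{i+1} + k_{i+1} + ⋯ + ℓ_n + k_n + m (so S_n = k_n + m and S₀ = N). -/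

import Mathlib

/-!
Induct on the number of blocks, peeling off `(k₀, ℓ₁)`: the `i = 0` factor is `(N + (n+1)a)^a`,
independent of the tuple, and what remains is the same sum with one block fewer, evaluated at
`N - k₀ - ℓ₁`. Two elementary estimates close the induction:
`∑_{p+q=N} p! (q+b)! ≤ 3 (N+b)!` (the two end terms are at most `(N+b)!`, each of the `N - 1`
middle terms at most `(N+b-1)!`), applied twice, and `N! (N+a)^a ≤ a^(a-1) (N+a)!`, obtained by
comparing `(N+a)^a` factor by factor with `(N+1)(N+2)⋯(N+a)`. Each block thus costs at most
`9 a^(a-1)`, and `9 ≤ 36`.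
-/

open Finset Nat

theorem succ_factorial_mul_succ_factorial_le (p q : ℕ) : (p + 1)! * (q + 1)! ≤ (p + q + 1)! := by
  induction p with
  | zero => simp
  | succ p ih =>
    calc (p + 1 + 1)! * (q + 1)! = (p + 2) * ((p + 1)! * (q + 1)!) := by
          rw [factorial_succ (p + 1)]; ring
      _ ≤ (p + q + 2) * (p + q + 1)! := Nat.mul_le_mul (by omega) ih
      _ = (p + q + 1 + 1)! := (factorial_succ _).symm
      _ = (p + 1 + q + 1)! := by rw [show p + 1 + q + 1 = p + q + 1 + 1 by ring]

theorem sum_antidiagonal_factorial_mul_factorial_add_le (N b : ℕ) :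
    ∑ p ∈ antidiagonal N, p.1 ! * (p.2 + b)! ≤ 3 * (N + b)! := by
  rw [Nat.sum_antidiagonal_eq_sum_range_succ_mk]
  rcases N with _ | K
  · simp only [zero_add, range_one, zero_tsub, sum_singleton, factorial_zero, one_mul]
    omega
  rw [sum_range_succ', sum_range_succ]
  have middle : ∑ i ∈ range K, (i + 1)! * (K + 1 - (i + 1) + b)! ≤ (K + 1 + b)! := by
    calc ∑ i ∈ range K, (i + 1)! * (K + 1 - (i + 1) + b)! ≤ ∑ _i ∈ range K, (K + b)! := by
          refine sum_le_sum fun i hi => ?_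
          have hiK := mem_range.mp hi
          have h := succ_factorial_mul_succ_factorial_le i (K - i - 1 + b)
          rwa [show K - i - 1 + b + 1 = K + 1 - (i + 1) + b by omega,
            show i + (K - i - 1 + b) + 1 = K + b by omega] at h
      _ = K * (K + b)! := by rw [sum_const, card_range, smul_eq_mul]
      _ ≤ (K + b + 1) * (K + b)! := Nat.mul_le_mul_right _ (by omega)
      _ = (K + 1 + b)! := by rw [← factorial_succ, show K + b + 1 = K + 1 + b by ring]
  have last : (K + 1)! * b ! ≤ (K + 1 + b)! :=
    le_of_dvd (factorial_pos _) (factorial_mul_factorial_dvd_factorial_add _ _)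
  simp only [Nat.sub_self, zero_add, Nat.sub_zero, factorial_zero, one_mul] at middle last ⊢
  omega

theorem sum_antidiagonal_antidiagonal_factorial_le (N b : ℕ) :
    ∑ p ∈ antidiagonal N, ∑ q ∈ antidiagonal p.2, p.1 ! * q.1 ! * (q.2 + b)! ≤ 9 * (N + b)! :=
  calc ∑ p ∈ antidiagonal N, ∑ q ∈ antidiagonal p.2, p.1 ! * q.1 ! * (q.2 + b)!
      = ∑ p ∈ antidiagonal N, p.1 ! * ∑ q ∈ antidiagonal p.2, q.1 ! * (q.2 + b)! := by
        simp only [mul_sum, mul_assoc]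
    _ ≤ ∑ p ∈ antidiagonal N, p.1 ! * (3 * (p.2 + b)!) := by
        gcongr with p; exact sum_antidiagonal_factorial_mul_factorial_add_le _ _
    _ = 3 * ∑ p ∈ antidiagonal N, p.1 ! * (p.2 + b)! := by
        rw [mul_sum]; exact sum_congr rfl fun p _ => by ring
    _ ≤ 3 * (3 * (N + b)!) := by gcongr; exact sum_antidiagonal_factorial_mul_factorial_add_le _ _
    _ = 9 * (N + b)! := by ring

theorem factorial_mul_pow_le_pow_mul_ascFactorial (N a : ℕ) :
    a ! * (N + a) ^ a ≤ a ^ a * (N + 1).ascFactorial a := by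
  have lhs : a ! * (N + a) ^ a = ∏ j ∈ range a, (j + 1) * (N + a) := by
    rw [prod_mul_distrib, prod_range_add_one_eq_factorial, prod_const, card_range]
  have rhs : a ^ a * (N + 1).ascFactorial a = ∏ j ∈ range a, a * (N + 1 + j) := by
    rw [prod_mul_distrib, prod_const, card_range, ascFactorial_eq_prod_range]
  rw [lhs, rhs]
  refine prod_le_prod' fun j hj => ?_
  have hja : j + 1 ≤ a := mem_range.mp hj
  nlinarith

theorem factorial_mul_add_pow_le (N a : ℕ) : N ! * (N + a) ^ a ≤ a ^ (a - 1) * (N + a)! := by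
  rcases a with _ | s
  · simp
  refine le_of_mul_le_mul_left ?_ (succ_pos s)
  calc (s + 1) * (N ! * (N + (s + 1)) ^ (s + 1))
      ≤ (s + 1)! * (N ! * (N + (s + 1)) ^ (s + 1)) := Nat.mul_le_mul_right _ (self_le_factorial _)
    _ = N ! * ((s + 1)! * (N + (s + 1)) ^ (s + 1)) := by ring
    _ ≤ N ! * ((s + 1) ^ (s + 1) * (N + 1).ascFactorial (s + 1)) :=
        Nat.mul_le_mul_left _ (factorial_mul_pow_le_pow_mul_ascFactorial N (s + 1))
    _ = (s + 1) * ((s + 1) ^ (s + 1 - 1) * (N + (s + 1))!) := by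
        rw [← factorial_mul_ascFactorial, Nat.add_sub_cancel, pow_succ]; ring

theorem sum_antidiagonalTuple_succ {M : Type*} [AddCommMonoid M] (k N : ℕ)
    (g : (Fin (k + 1) → ℕ) → M) :
    ∑ f ∈ Finset.Nat.antidiagonalTuple (k + 1) N, g f =
      ∑ p ∈ antidiagonal N, ∑ f ∈ Finset.Nat.antidiagonalTuple k p.2, g (Fin.cons p.1 f) := by
  simp only [Finset.sum, Finset.Nat.antidiagonalTuple, Multiset.Nat.antidiagonalTuple,
    List.Nat.antidiagonalTuple, ← Multiset.coe_bind, Multiset.map_bind, Multiset.sum_bind,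
    Multiset.map_coe, List.map_map]
  rfl

def compositionWeight (a m : ℕ) {k : ℕ} (f : Fin k → ℕ) : ℕ :=
  (∏ j, (f j)!) *
    ∏ i ∈ range m, ((∑ j ∈ univ.filter (fun j : Fin k => 2 * i ≤ (j : ℕ)), f j) + (m - i) * a) ^ a

theorem compositionWeight_cons_cons (a m x y : ℕ) {k : ℕ} (g : Fin k → ℕ) :
    compositionWeight a (m + 1) (Fin.cons x (Fin.cons y g) : Fin (k + 1 + 1) → ℕ) =
      x ! * y ! * (x + y + ∑ j, g j + (m + 1) * a) ^ a * compositionWeight a m g := by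
  have shift (i j : ℕ) : 2 * (i + 1) ≤ j + 1 + 1 ↔ 2 * i ≤ j := by omega
  have skip (i j : ℕ) (hj : j ≤ 1) : ¬ 2 * (i + 1) ≤ j := by omega
  simp only [compositionWeight, Fin.prod_univ_succ, Fin.cons_zero, Fin.cons_succ, prod_range_succ',
    sum_filter, Fin.sum_univ_succ, Fin.val_zero, Fin.val_succ, shift, Nat.add_sub_add_right,
    zero_add, skip, zero_le, mul_zero, if_true, if_false, Nat.sub_zero, le_refl]
  ring

theorem sum_compositionWeight_le (a m N : ℕ) :
    ∑ f ∈ Finset.Nat.antidiagonalTuple (2 * m) N, compositionWeight a m f ≤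
      (9 * a ^ (a - 1)) ^ m * (N + m * a)! := by
  induction m generalizing N with
  | zero => rcases N with _ | N <;> simp [compositionWeight]
  | succ m ih =>
    set C := 9 * a ^ (a - 1)
    set P := (N + (m + 1) * a) ^ a
    calc ∑ f ∈ Finset.Nat.antidiagonalTuple (2 * (m + 1)) N, compositionWeight a (m + 1) f
        = ∑ p ∈ antidiagonal N, ∑ q ∈ antidiagonal p.2, p.1 ! * q.1 ! * P *
            ∑ g ∈ Finset.Nat.antidiagonalTuple (2 * m) q.2, compositionWeight a m g := by
          rw [show 2 * (m + 1) = 2 * m + 1 + 1 by ring, sum_antidiagonalTuple_succ]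
          refine sum_congr rfl fun p hp => ?_
          rw [sum_antidiagonalTuple_succ]
          refine sum_congr rfl fun q hq => ?_
          rw [mul_sum]
          refine sum_congr rfl fun g hg => ?_
          rw [HasAntidiagonal.mem_antidiagonal] at hp hq
          rw [Finset.Nat.mem_antidiagonalTuple] at hg
          rw [compositionWeight_cons_cons, hg, show p.1 + q.1 + q.2 = N by omega]
      _ ≤ ∑ p ∈ antidiagonal N, ∑ q ∈ antidiagonal p.2, p.1 ! * q.1 ! * P *
            (C ^ m * (q.2 + m * a)!) := by gcongr; exact ih _
      _ = C ^ m * P *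
            ∑ p ∈ antidiagonal N, ∑ q ∈ antidiagonal p.2, p.1 ! * q.1 ! * (q.2 + m * a)! := by
          simp only [mul_sum]
          exact sum_congr rfl fun p _ => sum_congr rfl fun q _ => by ring
      _ ≤ C ^ m * P * (9 * (N + m * a)!) := by
          gcongr; exact sum_antidiagonal_antidiagonal_factorial_le _ _
      _ = 9 * C ^ m * ((N + m * a)! * (N + m * a + a) ^ a) := by
          rw [show N + m * a + a = N + (m + 1) * a by ring]; ring
      _ ≤ 9 * C ^ m * (a ^ (a - 1) * (N + m * a + a)!) :=
          Nat.mul_le_mul_left _ (factorial_mul_add_pow_le _ _)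
      _ = C ^ (m + 1) * (N + (m + 1) * a)! := by
          rw [show N + m * a + a = N + (m + 1) * a by ring]; ring

/-- A tuple `f : Fin (2n+2) → ℕ` encodes `(k₀, ℓ₁, k₁, ℓ₂, …, ℓ_n, k_n, m)`,
so `k_i = f (2i)`, `ℓ_i = f (2i−1)`, `m = f (2n+1)`, and the tail sum
`S_i = k_i + ℓ_{i+1} + ⋯ + ℓ_n + k_n + m` is the sum of the entries with index `≥ 2i`. -/
theorem stmt15_general (n a N : ℕ) :
    ∑ f ∈ Finset.Nat.antidiagonalTuple (2 * n + 2) N,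
        (∏ i, (f i).factorial) *
          ∏ i ∈ Finset.range (n + 1),
            ((∑ j ∈ Finset.univ.filter (fun j : Fin (2 * n + 2) => 2 * i ≤ (j : ℕ)), f j) +
                (n + 1 - i) * a) ^ a ≤
      (36 * a ^ (a - 1)) ^ (n + 1) * (N + (n + 1) * a).factorial :=
  calc _ ≤ (9 * a ^ (a - 1)) ^ (n + 1) * (N + (n + 1) * a)! := sum_compositionWeight_le a (n + 1) N
    _ ≤ _ := by gcongr; norm_num

/-- combinatorial inequality for the inverse of a singularly perturbed
linear operator.  A tuple `f : Fin (2n+2) → ℕ` encodes `(k₀, ℓ₁, k₁, ℓ₂, …, ℓ_n, k_n, m)`,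
so `k_i = f (2i)`, `ℓ_i = f (2i−1)`, `m = f (2n+1)`, and the tail sum
`S_i = k_i + ℓ_{i+1} + ⋯ + ℓ_n + k_n + m` is the sum of the entries with index `≥ 2i`. -/
theorem stmt15 (n a N : ℕ) (ha : 1 ≤ a) :
    ∑ f ∈ Finset.Nat.antidiagonalTuple (2 * n + 2) N,
        (∏ i, (f i).factorial) *
          ∏ i ∈ Finset.range (n + 1),
            ((∑ j ∈ Finset.univ.filter (fun j : Fin (2 * n + 2) => 2 * i ≤ (j : ℕ)), f j) +
                (n + 1 - i) * a) ^ a ≤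
      (36 * a ^ (a - 1)) ^ (n + 1) * (N + (n + 1) * a).factorial :=
  stmt15_general n a N
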